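/- arXiv:2406.09107 — 2 statements merged into one kernel-verified Lean document; each statement's English description precedes it below -/
import Mathlib

section
/- The sequence (√n)_{n≥1} is equidistributed modulo 1. -/
/-!
On the block `k² ≤ m < (k+1)²` we have `⌊√m⌋ = k`, so `fract √m ∈ [a, b]` exactly when
`(k + a)² ≤ m ≤ (k + b)²`: the block contributes `(b - a)(2k + 1) + O(1)` hits. Summing over the
blocks, the count below `K²` is `(b - a) K² + O(K)`, and since the counting function is monotone
this interpolates to `(b - a) N + O(√N)` for every `N`.
-/

open scoped Classical

open Finset Filter Topology

theorem Int.fract_sqrt_natCast_mem_Icc_iff {a b : ℝ} (ha : 0 ≤ a) (hb : 0 ≤ b) (m : ℕ) :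
    Int.fract √(m : ℝ) ∈ Set.Icc a b ↔
      ((m.sqrt : ℝ) + a) ^ 2 ≤ m ∧ (m : ℝ) ≤ ((m.sqrt : ℝ) + b) ^ 2 := by
  rw [Int.fract, Real.floor_real_sqrt_eq_nat_sqrt, Int.cast_natCast, Set.mem_Icc,
    le_sub_iff_add_le', sub_le_iff_le_add', Real.le_sqrt (by positivity) (by positivity),
    Real.sqrt_le_left (by positivity)]

theorem Nat.sqrt_eq_of_mem_Ico {k m : ℕ} (hm : m ∈ Ico (k ^ 2) ((k + 1) ^ 2)) : m.sqrt = k := by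
  rw [mem_Ico, sq, sq] at hm
  exact (Nat.eq_sqrt.2 hm).symm

theorem Nat.abs_card_Icc_ceil_floor_sub_le {x y : ℝ} (hx : 0 ≤ x) (hxy : x ≤ y) :
    |((Icc ⌈x⌉₊ ⌊y⌋₊).card : ℝ) - (y - x)| ≤ 1 := by
  have hx₁ := Nat.le_ceil x
  have hx₂ := Nat.ceil_lt_add_one hx
  have hy₁ := Nat.floor_le (hx.trans hxy)
  have hy₂ := Nat.lt_floor_add_one y
  rw [Nat.card_Icc, abs_sub_le_iff]
  rcases le_total ⌈x⌉₊ (⌊y⌋₊ + 1) with h | h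
  · rw [Nat.cast_sub h]
    push_cast
    constructor <;> linarith
  · have : (⌊y⌋₊ : ℝ) + 1 ≤ ⌈x⌉₊ := by exact_mod_cast h
    rw [Nat.sub_eq_zero_of_le h, Nat.cast_zero]
    constructor <;> linarith

theorem Finset.card_filter_range_succ_eq_of_iff (p : ℕ → Prop) [DecidablePred p] {M : ℕ}
    (hM : p M ↔ p 0) : #{n ∈ range M | p (n + 1)} = #{m ∈ range M | p m} := by
  have h₁ := sum_range_succ' (fun m => if p m then 1 else 0) M
  have h₂ := sum_range_succ (fun m => if p m then 1 else 0) M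
  rw [card_filter, card_filter]
  simp only [hM] at h₂
  omega

theorem Finset.card_filter_range_add_card_filter_Ico (p : ℕ → Prop) [DecidablePred p] {m n : ℕ}
    (hmn : m ≤ n) : #{k ∈ range m | p k} + #{k ∈ Ico m n | p k} = #{k ∈ range n | p k} := by
  simp only [card_filter]
  exact sum_range_add_sum_Ico _ hmn

section FractSqrt

variable {a b : ℝ}

theorem abs_card_filter_fract_sqrt_Ico_sq_sub_le (ha : 0 ≤ a) (hab : a ≤ b) (hb : b ≤ 1) (k : ℕ) :
    |(#{m ∈ Ico (k ^ 2) ((k + 1) ^ 2) | Int.fract √(m : ℕ) ∈ Set.Icc a b} : ℝ) -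
      (b - a) * (2 * k + 1)| ≤ 3 := by
  set x : ℝ := (k + a) ^ 2
  set y : ℝ := (k + b) ^ 2
  set T : Finset ℕ := Icc ⌈x⌉₊ ⌊y⌋₊
  set B : Finset ℕ := {m ∈ Ico (k ^ 2) ((k + 1) ^ 2) | Int.fract √(m : ℕ) ∈ Set.Icc a b}
  have hk : (0 : ℝ) ≤ k := k.cast_nonneg
  have hxy : x ≤ y := pow_le_pow_left₀ (by positivity) (by linarith) 2
  have hy : 0 ≤ y := by positivity
  have mem_B : ∀ m ∈ Ico (k ^ 2) ((k + 1) ^ 2), m ∈ B ↔ m ∈ T := fun m hm => by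
    rw [mem_filter, Int.fract_sqrt_natCast_mem_Icc_iff ha (ha.trans hab), Nat.sqrt_eq_of_mem_Ico hm,
      mem_Icc, Nat.ceil_le, Nat.le_floor_iff hy]
    exact and_iff_right hm
  have hBT : B ⊆ T := fun m hm => (mem_B m (mem_filter.1 hm).1).1 hm
  have hTB : T ⊆ insert ((k + 1) ^ 2) B := by
    intro m hm
    obtain ⟨hxm, hmy⟩ := mem_Icc.1 hm
    have hkm : ((k ^ 2 : ℕ) : ℝ) ≤ m := by
      push_cast
      exact (pow_le_pow_left₀ hk (by linarith) 2).trans (Nat.ceil_le.1 hxm)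
    have hmk : (m : ℝ) ≤ ((k + 1) ^ 2 : ℕ) := by
      push_cast
      exact ((Nat.le_floor_iff hy).1 hmy).trans (pow_le_pow_left₀ (by linarith) (by linarith) 2)
    rcases (Nat.cast_le.1 hmk).eq_or_lt with h | h
    · exact mem_insert.2 (Or.inl h)
    · exact mem_insert_of_mem ((mem_B m (mem_Ico.2 ⟨Nat.cast_le.1 hkm, h⟩)).2 hm)
  have hcard₁ : (#B : ℝ) ≤ #T := by exact_mod_cast card_le_card hBT
  have hcard₂ : (#T : ℝ) ≤ #B + 1 := by
    exact_mod_cast (card_le_card hTB).trans (card_insert_le _ _)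
  have hT := Nat.abs_card_Icc_ceil_floor_sub_le (by positivity) hxy
  -- `y - x = (b - a) (2k + a + b)` with `0 ≤ a + b ≤ 2`
  have hyx : |(y - x) - (b - a) * (2 * k + 1)| ≤ 1 := by
    rw [abs_sub_le_iff]
    constructor <;> nlinarith
  rw [abs_sub_le_iff] at hT hyx ⊢
  constructor <;> linarith

theorem abs_card_filter_fract_sqrt_range_sq_sub_le (ha : 0 ≤ a) (hab : a ≤ b) (hb : b ≤ 1)
    (K : ℕ) :
    |(#{m ∈ range (K ^ 2) | Int.fract √(m : ℕ) ∈ Set.Icc a b} : ℝ) - (b - a) * K ^ 2| ≤ 3 * K := by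
  have := dist_le_range_sum_of_dist_le (d := fun _ => 3)
    (f := fun k : ℕ =>
      (#{m ∈ range (k ^ 2) | Int.fract √(m : ℕ) ∈ Set.Icc a b} : ℝ) - (b - a) * k ^ 2)
    K fun {k} _ => by
      rw [Real.dist_eq, abs_sub_comm, ← Finset.card_filter_range_add_card_filter_Ico _
        (Nat.pow_le_pow_left k.le_succ 2), Nat.cast_add]
      convert abs_card_filter_fract_sqrt_Ico_sq_sub_le ha hab hb k using 2
      push_cast
      ring
  simpa [Real.dist_eq, abs_sub_comm, mul_comm] using this

end FractSqrt

section Growth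

variable {f : ℕ → ℝ} {α C E : ℝ}

theorem abs_sub_mul_le_of_monotone_of_sq (hf : Monotone f) (hα : 0 ≤ α)
    (hsq : ∀ K : ℕ, |f (K ^ 2) - α * K ^ 2| ≤ C * K) {N : ℕ} (hN : 1 ≤ N) :
    |f N - α * N| ≤ 2 * (2 * α + C) * √N := by
  have hC : 0 ≤ C := by simpa using (abs_nonneg _).trans (hsq 1)
  set K := N.sqrt
  have hlo := abs_sub_le_iff.1 (hsq K)
  have hhi := abs_sub_le_iff.1 (hsq (K + 1))
  have hfK : f (K ^ 2) ≤ f N := hf (Nat.sqrt_le' N)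
  have hfK₁ : f N ≤ f ((K + 1) ^ 2) := hf (Nat.lt_succ_sqrt' N).le
  have hKN : (K : ℝ) ^ 2 ≤ N := by exact_mod_cast Nat.sqrt_le' N
  have hNK : (N : ℝ) ≤ (K + 1) ^ 2 := by exact_mod_cast (Nat.lt_succ_sqrt' N).le
  have hK : (K : ℝ) + 1 ≤ 2 * √N := by
    have : (1 : ℝ) ≤ √N := Real.one_le_sqrt.2 (by exact_mod_cast hN)
    linarith [Real.nat_sqrt_le_real_sqrt (a := N)]
  have hbound : |f N - α * N| ≤ (2 * α + C) * (K + 1) := by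
    push_cast at hhi
    rw [abs_sub_le_iff]
    constructor <;> nlinarith
  calc |f N - α * N| ≤ (2 * α + C) * (K + 1) := hbound
    _ ≤ (2 * α + C) * (2 * √N) := by gcongr
    _ = 2 * (2 * α + C) * √N := by ring

theorem tendsto_div_of_abs_sub_mul_le_sqrt (h : ∀ N : ℕ, 1 ≤ N → |f N - α * N| ≤ E * √N) :
    Tendsto (fun N : ℕ => f N / N) atTop (𝓝 α) := by
  rw [tendsto_iff_norm_sub_tendsto_zero]
  have hsqrt_tendsto : Tendsto (fun N : ℕ => √N) atTop atTop :=
    Real.tendsto_sqrt_atTop.comp tendsto_natCast_atTop_atTop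
  refine squeeze_zero' (Eventually.of_forall fun _ => norm_nonneg _) ?_
    ((tendsto_const_nhds (x := E)).div_atTop hsqrt_tendsto)
  filter_upwards [eventually_ge_atTop 1] with N hN
  have hN₀ : (0 : ℝ) < N := by exact_mod_cast hN
  have hsqrt : (0 : ℝ) < √N := Real.sqrt_pos.2 hN₀
  calc ‖f N / N - α‖ = |f N - α * N| / N := by
        rw [Real.norm_eq_abs, ← abs_of_pos hN₀, ← abs_div, abs_of_pos hN₀]
        congr 1
        field_simp
    _ ≤ E * √N / N := by gcongr; exact h N hN
    _ = E / √N := by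
        rw [div_eq_div_iff hN₀.ne' hsqrt.ne', mul_assoc, Real.mul_self_sqrt hN₀.le]

end Growth

/-- The sequence `(√n)ₙ` is equidistributed modulo 1: for every interval `[a,b] ⊆ [0,1]`,
the proportion of `n ≤ N` with fractional part of `√n` in `[a,b]` tends to `b - a`. -/
theorem stmt5 (a b : ℝ) (ha : 0 ≤ a) (hab : a ≤ b) (hb : b ≤ 1) :
    Filter.Tendsto (fun N : ℕ =>
      (((Finset.range N).filter
          (fun n => Int.fract (Real.sqrt (n + 1)) ∈ Set.Icc a b)).card : ℝ) / N)
      Filter.atTop (nhds (b - a)) := by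
  set s : ℕ → ℕ := fun N => #{n ∈ range N | Int.fract √((n + 1 : ℕ) : ℝ) ∈ Set.Icc a b}
  -- In the statement `range N` is coerced to a `Finset ℝ` through the `Finset` monad.
  have hs : ∀ N : ℕ, ((Finset.range N).filter
      (fun n => Int.fract (Real.sqrt (n + 1)) ∈ Set.Icc a b)).card = s N := fun N => by
    rw [bind_pure_comp, Finset.fmap_def, filter_image, card_image_of_injective _ Nat.cast_injective]
    push_cast [s]
    rfl
  have hs_mono : Monotone fun N => (s N : ℝ) := fun M N hMN =>
    Nat.cast_le.2 (card_le_card (filter_subset_filter _ (range_subset_range.2 hMN)))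
  -- Shifting `n ↦ n + 1` is harmless at squares: `√0` and `√(K²)` are both integers.
  have hs_sq : ∀ K : ℕ, |(s (K ^ 2) : ℝ) - (b - a) * K ^ 2| ≤ 3 * K := fun K => by
    rw [show s (K ^ 2) = _ from Finset.card_filter_range_succ_eq_of_iff
      (fun m => Int.fract √(m : ℕ) ∈ Set.Icc a b) (by simp)]
    exact abs_card_filter_fract_sqrt_range_sq_sub_le ha hab hb K
  simp_rw [hs]
  exact tendsto_div_of_abs_sub_mul_le_sqrt fun N hN =>
    abs_sub_mul_le_of_monotone_of_sq hs_mono (by linarith) hs_sq hN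
end

section
/- The rotated process Θ·k(π/2) does not have the same distribution as Θ; in particular, Θ is not invariant under the full SL(2,ℝ) action on ℝ². Specifically: almost surely, the restriction of Θ to the open right half plane coincides with the restriction of a single affine lattice, whereas the restriction of Θ·((0,-1),(1,0)) to the open right half plane almost surely does not coincide with the restriction of any single affine lattice. -/
/-!
On the open right half plane `Θ(g)` is the affine lattice `ℤ²M + v` of `g = (M, v)`. After the
rotation `k`, the open right half plane instead sees `ℤ²Mk + vk` below the horizontal axis and
`-(ℤ² + w)Mk` above it. If these two pieces glued to a single affine lattice `L`, the difference
`u` of a point above and a point below would be a period of `L`; translating by `u` a point far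
out in the upper quadrant shows that `u` is then also a period of `ℤ²Mk`, so the two affine
lattices coincide: `wM + 2v ∈ ℤ²M`. That set of `g` is invariant under `Λ`, because
`Γ_{2,0}(4)` fixes `w` modulo `ℤ²`, and for fixed `M` only countably many `v` lie in it. Averaging
the invariance of `μ` under the translations `(1, t)` over Lebesgue-almost every `t` (Fubini)
shows that it is `μ`-null.
-/

open MeasureTheory
open scoped ENNReal

instance : MeasurableSpace (Matrix (Fin 2) (Fin 2) ℝ) := by
  unfold Matrix; infer_instance

/-- Multiplication in `ASL(2,ℝ)`: `(M,v)(M',v') = (MM', vM' + v')`. -/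
noncomputable def aslMul (g h : Matrix (Fin 2) (Fin 2) ℝ × (Fin 2 → ℝ)) :
    Matrix (Fin 2) (Fin 2) ℝ × (Fin 2 → ℝ) :=
  (g.1 * h.1, Matrix.vecMul g.2 h.1 + h.2)

/-- Action of `(M,v) ∈ ASL(2,ℝ)` on a row vector: `x ↦ xM + v`. -/
noncomputable def aslAct (g : Matrix (Fin 2) (Fin 2) ℝ × (Fin 2 → ℝ)) (x : Fin 2 → ℝ) :
    Fin 2 → ℝ :=
  Matrix.vecMul x g.1 + g.2

/-- Membership in `Λ = Γ_{2,0}(4) ⋉ ℤ²`. -/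
def inLambda (γ : Matrix (Fin 2) (Fin 2) ℝ × (Fin 2 → ℝ)) : Prop :=
  (∃ γ₀ : Matrix (Fin 2) (Fin 2) ℤ, γ.1 = γ₀.map (Int.cast : ℤ → ℝ) ∧ γ₀.det = 1 ∧
    (γ₀.map (Int.cast : ℤ → ZMod 4) = 1 ∨ γ₀.map (Int.cast : ℤ → ZMod 4) = !![1, 2; 0, 1]))
    ∧ ∃ m : Fin 2 → ℤ, γ.2 = fun i => (m i : ℝ)

/-- The shift vector `w = (1/2, -1/4)`. -/
noncomputable def wvec : Fin 2 → ℝ := ![1/2, -1/4]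

/-- The right and left closed half planes. -/
def Hplus : Set (Fin 2 → ℝ) := {x | 0 ≤ x 0}
def Hminus : Set (Fin 2 → ℝ) := {x | x 0 ≤ 0}

/-- The open right half plane. -/
def HplusOpen : Set (Fin 2 → ℝ) := {x | 0 < x 0}

/-- The point set `Θ(g) = (ℤ²g ∩ H₊) ∪ (-([ℤ²+(1/2,-1/4)]g) ∩ H₋)`. -/
noncomputable def ThetaSet (g : Matrix (Fin 2) (Fin 2) ℝ × (Fin 2 → ℝ)) :
    Set (Fin 2 → ℝ) :=
  ({x | ∃ m : Fin 2 → ℤ, x = aslAct g fun i => (m i : ℝ)} ∩ Hplus) ∪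
  ({x | ∃ m : Fin 2 → ℤ, x = -(aslAct g ((fun i => (m i : ℝ)) + wvec))} ∩ Hminus)

/-- The affine lattice `ℤ²M + v`. -/
def affLattice (M : Matrix (Fin 2) (Fin 2) ℝ) (v : Fin 2 → ℝ) : Set (Fin 2 → ℝ) :=
  {x | ∃ m : Fin 2 → ℤ, x = Matrix.vecMul (fun i => (m i : ℝ)) M + v}

/-- `S` looks like a single affine lattice on the open right half plane. -/
def IsAffLatticeOnRight (S : Set (Fin 2 → ℝ)) : Prop :=
  ∃ M v, M.det ≠ 0 ∧ S ∩ HplusOpen = affLattice M v ∩ HplusOpen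

/-- The rotation `k(π/2) = ((0,-1),(1,0))` applied to a point set on the right. -/
noncomputable def rotSet (S : Set (Fin 2 → ℝ)) : Set (Fin 2 → ℝ) :=
  (fun x => Matrix.vecMul x (!![0, -1; 1, 0] : Matrix (Fin 2) (Fin 2) ℝ)) '' S

open Matrix

section RowLattice

variable {ι : Type*} [Fintype ι]

/-- `ℤⁿM`, in the row-vector convention of `affLattice`. -/
def rowLattice (M : Matrix ι ι ℝ) : AddSubgroup (ι → ℝ) :=
  ((vecMulLinear M).toAddMonoidHom.comp ((Int.castAddHom ℝ).compLeft ι)).range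

theorem mem_rowLattice {M : Matrix ι ι ℝ} {u : ι → ℝ} :
    u ∈ rowLattice M ↔ ∃ m : ι → ℤ, vecMul (fun i => (m i : ℝ)) M = u := Iff.rfl

theorem countable_rowLattice (M : Matrix ι ι ℝ) : (rowLattice M : Set (ι → ℝ)).Countable := by
  rw [rowLattice, AddMonoidHom.coe_range]
  exact Set.countable_range _

theorem intCast_vecMul (m : ι → ℤ) (γ : Matrix ι ι ℤ) :
    (fun j => ((vecMul m γ j : ℤ) : ℝ)) = vecMul (fun i => (m i : ℝ)) (γ.map Int.cast) :=
  funext fun j => RingHom.map_vecMul (Int.castRingHom ℝ) γ m j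

theorem rowLattice_intCast_mul_le (γ : Matrix ι ι ℤ) (M : Matrix ι ι ℝ) :
    rowLattice (γ.map (Int.cast : ℤ → ℝ) * M) ≤ rowLattice M := by
  rintro _ ⟨m, rfl⟩
  refine ⟨vecMul m γ, ?_⟩
  change vecMul (fun j => ((vecMul m γ j : ℤ) : ℝ)) M = vecMul (fun i => (m i : ℝ)) _
  rw [intCast_vecMul, vecMul_vecMul]

theorem rowLattice_intCast_mul [DecidableEq ι] {γ : Matrix ι ι ℤ} (hγ : IsUnit γ.det)
    (M : Matrix ι ι ℝ) : rowLattice (γ.map (Int.cast : ℤ → ℝ) * M) = rowLattice M := by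
  refine le_antisymm (rowLattice_intCast_mul_le γ M) ?_
  have hinv := congrArg (Matrix.map · (Int.castRingHom ℝ)) (nonsing_inv_mul γ hγ)
  rw [Matrix.map_mul, Matrix.map_one _ (map_zero _) (map_one _), Int.coe_castRingHom] at hinv
  calc rowLattice M = rowLattice (γ⁻¹.map Int.cast * (γ.map Int.cast * M)) := by
        rw [← Matrix.mul_assoc, hinv, Matrix.one_mul]
    _ ≤ rowLattice (γ.map Int.cast * M) := rowLattice_intCast_mul_le _ _

theorem vecMul_mem_rowLattice_mul {M : Matrix ι ι ℝ} {x : ι → ℝ} (hx : x ∈ rowLattice M)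
    (A : Matrix ι ι ℝ) : vecMul x A ∈ rowLattice (M * A) := by
  obtain ⟨m, rfl⟩ := hx
  exact ⟨m, (vecMul_vecMul _ M A).symm⟩

theorem vecMul_mem_rowLattice_mul_iff [DecidableEq ι] {A : Matrix ι ι ℝ} (hA : IsUnit A.det)
    {M : Matrix ι ι ℝ} {x : ι → ℝ} : vecMul x A ∈ rowLattice (M * A) ↔ x ∈ rowLattice M := by
  refine ⟨fun h => ?_, fun h => vecMul_mem_rowLattice_mul h A⟩
  simpa [vecMul_vecMul, Matrix.mul_assoc, mul_nonsing_inv A hA] using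
    vecMul_mem_rowLattice_mul h A⁻¹

theorem exists_norm_sub_le_of_mem_rowLattice [DecidableEq ι] {M : Matrix ι ι ℝ}
    (hM : IsUnit M.det) : ∃ R, ∀ x, ∃ u ∈ rowLattice M, ‖x - u‖ ≤ R := by
  set T := LinearMap.toContinuousLinearMap (vecMulLinear M)
  refine ⟨‖T‖, fun x => ?_⟩
  set s := vecMul x M⁻¹
  refine ⟨vecMul (fun i => ((⌊s i⌋ : ℤ) : ℝ)) M, ⟨fun i => ⌊s i⌋, rfl⟩, ?_⟩
  have hx : x - vecMul (fun i => ((⌊s i⌋ : ℤ) : ℝ)) M = T (fun i => Int.fract (s i)) := by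
    conv_lhs => rw [← vecMul_one x, ← nonsing_inv_mul M hM, ← vecMul_vecMul]
    rw [← sub_vecMul]
    rfl
  have hfract : ‖fun i => Int.fract (s i)‖ ≤ 1 :=
    (pi_norm_le_iff_of_nonneg zero_le_one).2 fun i => by
      rw [Real.norm_of_nonneg (Int.fract_nonneg _)]
      exact (Int.fract_lt_one _).le
  rw [hx]
  simpa using T.le_opNorm_of_le hfract

end RowLattice

theorem mem_affLattice_iff {M : Matrix (Fin 2) (Fin 2) ℝ} {v x : Fin 2 → ℝ} :
    x ∈ affLattice M v ↔ x - v ∈ rowLattice M := by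
  rw [mem_rowLattice]
  exact exists_congr fun _ => by rw [eq_sub_iff_add_eq, eq_comm]

theorem image_vecMul_affLattice (M A : Matrix (Fin 2) (Fin 2) ℝ) (v : Fin 2 → ℝ) :
    (fun x => vecMul x A) '' affLattice M v = affLattice (M * A) (vecMul v A) := by
  ext y
  constructor
  · rintro ⟨_, ⟨m, rfl⟩, rfl⟩
    exact ⟨m, by simp only [add_vecMul, vecMul_vecMul]⟩
  · rintro ⟨m, rfl⟩
    exact ⟨_, ⟨m, rfl⟩, by simp only [add_vecMul, vecMul_vecMul]⟩

theorem exists_mem_affLattice_forall_lt {M : Matrix (Fin 2) (Fin 2) ℝ} (hM : M.det ≠ 0)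
    (v : Fin 2 → ℝ) (C : ℝ) (s : Fin 2 → ℝ) (hs : ∀ j, |s j| = 1) :
    ∃ p ∈ affLattice M v, ∀ j, C < s j * p j := by
  obtain ⟨R, hR⟩ := exists_norm_sub_le_of_mem_rowLattice (isUnit_iff_ne_zero.2 hM)
  set z : Fin 2 → ℝ := fun j => (C + R + 1) * s j
  obtain ⟨u, hu, hzu⟩ := hR (z - v)
  refine ⟨v + u, mem_affLattice_iff.2 (by simpa using hu), fun j => ?_⟩
  have hj : |s j * (z j - (v + u) j)| ≤ R := by
    rw [abs_mul, hs j, one_mul]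
    simpa [sub_sub] using (norm_le_pi_norm (z - v - u) j).trans hzu
  have hsz : s j * z j = C + R + 1 := by
    have := sq_abs (s j)
    rw [hs j] at this
    linear_combination -(C + R + 1) * this
  have := le_abs_self (s j * (z j - (v + u) j))
  linarith [show s j * (v + u) j = s j * z j - s j * (z j - (v + u) j) by ring]

theorem sub_mem_rowLattice_of_affLattice_eq_piecewise {M M₀ : Matrix (Fin 2) (Fin 2) ℝ}
    (hM₀ : M₀.det ≠ 0) {v a b : Fin 2 → ℝ}
    (h : affLattice M v ∩ HplusOpen =
      ((affLattice M₀ a ∩ {y | y 1 ≤ 0}) ∪ (affLattice M₀ b ∩ {y | 0 ≤ y 1})) ∩ HplusOpen) :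
    b - a ∈ rowLattice M₀ := by
  have hL : ∀ y, 0 < y 0 → (y ∈ affLattice M v ↔
      y ∈ affLattice M₀ a ∧ y 1 ≤ 0 ∨ y ∈ affLattice M₀ b ∧ 0 ≤ y 1) := fun y hy => by
    simpa [HplusOpen, hy] using Set.ext_iff.1 h y
  obtain ⟨c, hcb, hc⟩ := exists_mem_affLattice_forall_lt hM₀ b 0 1 (by simp)
  obtain ⟨d, hda, hd⟩ := exists_mem_affLattice_forall_lt hM₀ a 0 ![1, -1]
    (by simp [Fin.forall_fin_two])
  simp only [Fin.forall_fin_two, Pi.one_apply, one_mul, cons_val_zero, cons_val_one,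
    neg_mul, Left.neg_pos_iff] at hc hd
  have hcv := mem_affLattice_iff.1 <| (hL c hc.1).2 (.inr ⟨hcb, hc.2.le⟩)
  have hdv := mem_affLattice_iff.1 <| (hL d hd.1).2 (.inl ⟨hda, hd.2.le⟩)
  -- translating a point of `ℤ²M₀ + b` far out in the upper quadrant by the period `u` of
  -- `ℤ²M + v` stays in that quadrant, so `u` is also a period of `ℤ²M₀ + b`
  set u := c - d
  have hu : u ∈ rowLattice M := by simpa [u] using sub_mem hcv hdv
  have hu_le : ∀ j, |u j| ≤ ‖u‖ := fun j => by simpa using norm_le_pi_norm u j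
  obtain ⟨e, heb, he⟩ := exists_mem_affLattice_forall_lt hM₀ b ‖u‖ 1 (by simp)
  simp only [Pi.one_apply, one_mul] at he
  have heu : ∀ j, 0 < (e + u) j := fun j => by
    have := neg_abs_le (u j)
    simp only [Pi.add_apply]
    linarith [he j, hu_le j]
  have hev := mem_affLattice_iff.1 <| (hL e ((norm_nonneg u).trans_lt (he 0))).2
    (.inr ⟨heb, ((norm_nonneg u).trans_lt (he 1)).le⟩)
  have heub : e + u ∈ affLattice M₀ b := by
    have : e + u ∈ affLattice M v :=
      mem_affLattice_iff.2 (by simpa [add_sub_right_comm] using add_mem hev hu)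
    rcases (hL _ (heu 0)).1 this with h | h
    · exact absurd h.2 (not_le.2 (heu 1))
    · exact h.1
  have hu₀ : u ∈ rowLattice M₀ := by
    simpa using sub_mem (mem_affLattice_iff.1 heub) (mem_affLattice_iff.1 heb)
  convert add_mem (sub_mem hu₀ (mem_affLattice_iff.1 hcb)) (mem_affLattice_iff.1 hda) using 1
  simp only [u]
  abel

theorem ThetaSet_eq (g : Matrix (Fin 2) (Fin 2) ℝ × (Fin 2 → ℝ)) :
    ThetaSet g = (affLattice g.1 g.2 ∩ Hplus) ∪
      (affLattice g.1 (-(vecMul wvec g.1 + g.2)) ∩ Hminus) := by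
  have : {x | ∃ m : Fin 2 → ℤ, x = -(aslAct g ((fun i => (m i : ℝ)) + wvec))} =
      affLattice g.1 (-(vecMul wvec g.1 + g.2)) := by
    ext x
    refine ⟨fun ⟨m, hm⟩ => ⟨-m, ?_⟩, fun ⟨m, hm⟩ => ⟨-m, ?_⟩⟩ <;>
      simp only [hm, aslAct, Pi.neg_apply, Int.cast_neg, ← Pi.neg_def, neg_vecMul, add_vecMul] <;>
      abel
  rw [ThetaSet, this]
  rfl

theorem isAffLatticeOnRight_ThetaSet {g : Matrix (Fin 2) (Fin 2) ℝ × (Fin 2 → ℝ)}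
    (hg : g.1.det ≠ 0) : IsAffLatticeOnRight (ThetaSet g) := by
  refine ⟨g.1, g.2, hg, ?_⟩
  ext x
  simp only [ThetaSet_eq, Set.mem_inter_iff, Set.mem_union, Hplus, Hminus, HplusOpen,
    Set.mem_ofPred_eq]
  constructor
  · rintro ⟨⟨hx, -⟩ | ⟨-, hx0⟩, hpos⟩
    · exact ⟨hx, hpos⟩
    · exact absurd hpos (not_lt.2 hx0)
  · rintro ⟨hx, hpos⟩
    exact ⟨.inl ⟨hx, hpos.le⟩, hpos⟩

theorem rotSet_eq_preimage (S : Set (Fin 2 → ℝ)) :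
    rotSet S = (fun y => vecMul y !![0, 1; -1, 0]) ⁻¹' S := by
  refine congrFun (Set.image_eq_preimage_of_inverse (fun x => ?_) (fun y => ?_)) S <;>
    ext i <;> fin_cases i <;> simp [vecHead, vecTail]

theorem rotSet_ThetaSet (g : Matrix (Fin 2) (Fin 2) ℝ × (Fin 2 → ℝ)) :
    rotSet (ThetaSet g) =
      (affLattice (g.1 * !![0, -1; 1, 0]) (vecMul g.2 !![0, -1; 1, 0]) ∩ {y | y 1 ≤ 0}) ∪
      (affLattice (g.1 * !![0, -1; 1, 0]) (vecMul (-(vecMul wvec g.1 + g.2)) !![0, -1; 1, 0]) ∩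
        {y | 0 ≤ y 1}) := by
  have hL : ∀ M v, (fun y => vecMul y !![0, 1; -1, 0]) ⁻¹' affLattice M v =
      affLattice (M * !![0, -1; 1, 0]) (vecMul v !![0, -1; 1, 0]) := fun M v => by
    rw [← rotSet_eq_preimage, rotSet, image_vecMul_affLattice]
  rw [rotSet_eq_preimage, ThetaSet_eq, Set.preimage_union, Set.preimage_inter, Set.preimage_inter,
    hL, hL]
  congr 2 <;> ext y <;> simp [Hplus, Hminus, vecHead, vecTail]

theorem dvd_entries_of_mem_Gamma20Four {γ : Matrix (Fin 2) (Fin 2) ℤ}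
    (hγ : γ.map (Int.cast : ℤ → ZMod 4) = 1 ∨ γ.map (Int.cast : ℤ → ZMod 4) = !![1, 2; 0, 1]) :
    2 ∣ γ 0 0 - 1 ∧ 2 ∣ γ 0 1 ∧ 4 ∣ γ 1 0 ∧ 4 ∣ γ 1 1 - 1 := by
  have entry : ∀ i j (k : ℤ), γ.map (Int.cast : ℤ → ZMod 4) i j = k → γ i j % 4 = k % 4 :=
    fun i j k h => (ZMod.intCast_eq_intCast_iff' _ _ 4).1 h
  rcases hγ with h | h <;> rw [h] at entry
  · have e00 := entry 0 0 1 (by simp); have e01 := entry 0 1 0 (by simp)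
    have e10 := entry 1 0 0 (by simp); have e11 := entry 1 1 1 (by simp)
    omega
  · have e00 := entry 0 0 1 (by simp); have e01 := entry 0 1 2 (by simp)
    have e10 := entry 1 0 0 (by simp); have e11 := entry 1 1 1 (by simp)
    omega

theorem vecMul_wvec_sub_mem_rowLattice_one {γ : Matrix (Fin 2) (Fin 2) ℤ}
    (h00 : 2 ∣ γ 0 0 - 1) (h01 : 2 ∣ γ 0 1) (h10 : 4 ∣ γ 1 0) (h11 : 4 ∣ γ 1 1 - 1) :
    vecMul wvec (γ.map Int.cast) - wvec ∈ rowLattice 1 := by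
  refine ⟨![(γ 0 0 - 1) / 2 - γ 1 0 / 4, γ 0 1 / 2 - (γ 1 1 - 1) / 4], ?_⟩
  ext j
  fin_cases j <;> simp [vecMul, dotProduct, wvec, Int.cast_div, h00, h01, h10, h11] <;> ring

/-- The `g` for which the two affine lattices `ℤ²g` and `-(ℤ² + w)g` making up `Θ(g)`
coincide. -/
def degenerateSet : Set (Matrix (Fin 2) (Fin 2) ℝ × (Fin 2 → ℝ)) :=
  {g | vecMul wvec g.1 + (2 : ℝ) • g.2 ∈ rowLattice g.1}

theorem mem_degenerateSet_of_isAffLatticeOnRight_rotSet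
    {g : Matrix (Fin 2) (Fin 2) ℝ × (Fin 2 → ℝ)} (hg : g.1.det ≠ 0)
    (h : IsAffLatticeOnRight (rotSet (ThetaSet g))) : g ∈ degenerateSet := by
  obtain ⟨M, v, -, hMv⟩ := h
  rw [rotSet_ThetaSet] at hMv
  have hR : IsUnit (!![0, -1; 1, 0] : Matrix (Fin 2) (Fin 2) ℝ).det := by simp [det_fin_two]
  have hdet : (g.1 * !![0, -1; 1, 0]).det ≠ 0 := by
    rw [det_mul]
    exact mul_ne_zero hg hR.ne_zero
  have h := sub_mem_rowLattice_of_affLattice_eq_piecewise hdet hMv.symm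
  rw [← sub_vecMul, vecMul_mem_rowLattice_mul_iff hR] at h
  show vecMul wvec g.1 + (2 : ℝ) • g.2 ∈ rowLattice g.1
  convert neg_mem h using 1
  module

theorem aslMul_mem_degenerateSet_iff {γ : Matrix (Fin 2) (Fin 2) ℝ × (Fin 2 → ℝ)}
    (hγ : inLambda γ) (g : Matrix (Fin 2) (Fin 2) ℝ × (Fin 2 → ℝ)) :
    aslMul γ g ∈ degenerateSet ↔ g ∈ degenerateSet := by
  obtain ⟨⟨γ₀, hγ₁, hdet, hcong⟩, m, hγ₂⟩ := hγ
  obtain ⟨h00, h01, h10, h11⟩ := dvd_entries_of_mem_Gamma20Four hcong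
  have hw := vecMul_mem_rowLattice_mul (vecMul_wvec_sub_mem_rowLattice_one h00 h01 h10 h11) g.1
  rw [Matrix.one_mul, ← hγ₁] at hw
  have hm : vecMul γ.2 g.1 ∈ rowLattice g.1 := hγ₂ ▸ ⟨m, rfl⟩
  have hlat : rowLattice (γ.1 * g.1) = rowLattice g.1 := by
    rw [hγ₁]
    exact rowLattice_intCast_mul (by simp [hdet]) g.1
  have hshift : vecMul wvec (aslMul γ g).1 + (2 : ℝ) • (aslMul γ g).2 =
      vecMul wvec g.1 + (2 : ℝ) • g.2 +
        (vecMul (vecMul wvec γ.1 - wvec) g.1 + (vecMul γ.2 g.1 + vecMul γ.2 g.1)) := by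
    simp only [aslMul, ← vecMul_vecMul, sub_vecMul]
    module
  change _ ∈ rowLattice (γ.1 * g.1) ↔ _
  rw [hlat, hshift, AddSubgroup.add_mem_cancel_right _ (add_mem hw (add_mem hm hm))]
  rfl

theorem measurableSet_degenerateSet : MeasurableSet degenerateSet := by
  have : degenerateSet = ⋃ m : Fin 2 → ℤ,
      {g | vecMul (fun i => (m i : ℝ)) g.1 = vecMul wvec g.1 + (2 : ℝ) • g.2} := by
    ext g
    simp [degenerateSet, mem_rowLattice]
  rw [this]
  refine MeasurableSet.iUnion fun m => measurableSet_eq_fun ?_ ?_ <;>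
    simp_rw [vecMul_eq_sum] <;> fun_prop

theorem volume_translation_fiber_degenerateSet (g : Matrix (Fin 2) (Fin 2) ℝ × (Fin 2 → ℝ)) :
    volume {t : Fin 2 → ℝ | (g.1, g.2 + t) ∈ degenerateSet} = 0 := by
  have hinj : Function.Injective fun t : Fin 2 → ℝ => vecMul wvec g.1 + (2 : ℝ) • (g.2 + t) :=
    fun s t h => by simpa using h
  exact ((countable_rowLattice g.1).preimage hinj).measure_zero _

theorem measure_eq_zero_of_translation_fibers_null {X E : Type*} [MeasurableSpace X]
    [MeasurableSpace E] [Add E] [MeasurableAdd₂ E] {μ : Measure (X × E)} {ν : Measure E}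
    [SFinite μ] [SFinite ν] [NeZero ν] {S : Set (X × E)} (hS : MeasurableSet S)
    (hμ : ∀ t, μ {g | (g.1, g.2 + t) ∈ S} = μ S)
    (hν : ∀ g : X × E, ν {t | (g.1, g.2 + t) ∈ S} = 0) : μ S = 0 := by
  set T : Set ((X × E) × E) := {p | (p.1.1, p.1.2 + p.2) ∈ S}
  have hT : MeasurableSet T :=
    (measurable_fst.fst.prodMk (measurable_fst.snd.add measurable_snd)) hS
  have h₁ : μ.prod ν T = 0 := by
    rw [Measure.prod_apply hT]
    exact (lintegral_congr hν).trans lintegral_zero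
  have h₂ : μ.prod ν T = μ S * ν Set.univ := by
    rw [Measure.prod_apply_symm hT]
    exact (lintegral_congr hμ).trans (lintegral_const _)
  simpa [h₁, NeZero.ne] using h₂

def RightInvariantModLambda (μ : Measure (Matrix (Fin 2) (Fin 2) ℝ × (Fin 2 → ℝ))) : Prop :=
  ∀ h : Matrix (Fin 2) (Fin 2) ℝ × (Fin 2 → ℝ), h.1.det = 1 →
    ∀ F : Matrix (Fin 2) (Fin 2) ℝ × (Fin 2 → ℝ) → ℝ≥0∞, Measurable F →
      (∀ γ, inLambda γ → ∀ g, F (aslMul γ g) = F g) →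
      ∫⁻ g, F (aslMul g h) ∂μ = ∫⁻ g, F g ∂μ

theorem measure_translate_eq_of_lambda_invariant
    {μ : Measure (Matrix (Fin 2) (Fin 2) ℝ × (Fin 2 → ℝ))} (hμ : RightInvariantModLambda μ)
    {S : Set (Matrix (Fin 2) (Fin 2) ℝ × (Fin 2 → ℝ))} (hS : MeasurableSet S)
    (hΛ : ∀ γ, inLambda γ → ∀ g, aslMul γ g ∈ S ↔ g ∈ S) (t : Fin 2 → ℝ) :
    μ {g | (g.1, g.2 + t) ∈ S} = μ S := by
  have h := hμ (1, t) (by simp) (S.indicator 1) (measurable_one.indicator hS)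
    (fun γ hγ g => by by_cases hg : g ∈ S <;> simp [hg, hΛ γ hγ])
  have hshift : ∀ g : Matrix (Fin 2) (Fin 2) ℝ × (Fin 2 → ℝ), aslMul g (1, t) = (g.1, g.2 + t) :=
    fun g => by simp [aslMul]
  simp only [hshift, lintegral_indicator_one hS] at h
  have hpre : MeasurableSet {g : Matrix (Fin 2) (Fin 2) ℝ × (Fin 2 → ℝ) | (g.1, g.2 + t) ∈ S} :=
    hS.preimage (by fun_prop)
  rw [← h, ← lintegral_indicator_one hpre]
  rfl

theorem measure_degenerateSet_eq_zero {μ : Measure (Matrix (Fin 2) (Fin 2) ℝ × (Fin 2 → ℝ))}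
    [SFinite μ] (hμ : RightInvariantModLambda μ) : μ degenerateSet = 0 :=
  measure_eq_zero_of_translation_fibers_null (ν := volume) measurableSet_degenerateSet
    (measure_translate_eq_of_lambda_invariant hμ measurableSet_degenerateSet
      fun _ hγ => aslMul_mem_degenerateSet_iff hγ)
    volume_translation_fiber_degenerateSet

/-- The rotated process `Θ·k(π/2)` does not have the same distribution as `Θ`, so `Θ` is
not `SL(2,ℝ)`-invariant: almost surely `Θ` restricted to the open right half plane is the
restriction of a single affine lattice, whereas `Θ·((0,-1),(1,0))` restricted to the open
right half plane almost surely is not; in particular the probabilities of this event for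
the two processes differ. -/
theorem stmt19 (μ : Measure (Matrix (Fin 2) (Fin 2) ℝ × (Fin 2 → ℝ)))
    [IsProbabilityMeasure μ] (hdet : ∀ᵐ g ∂μ, g.1.det = 1)
    (hinv : ∀ h : Matrix (Fin 2) (Fin 2) ℝ × (Fin 2 → ℝ), h.1.det = 1 →
      ∀ F : Matrix (Fin 2) (Fin 2) ℝ × (Fin 2 → ℝ) → ℝ≥0∞, Measurable F →
        (∀ γ, inLambda γ → ∀ g, F (aslMul γ g) = F g) →
        ∫⁻ g, F (aslMul g h) ∂μ = ∫⁻ g, F g ∂μ) :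
    (∀ g : Matrix (Fin 2) (Fin 2) ℝ × (Fin 2 → ℝ), g.1.det = 1 →
      IsAffLatticeOnRight (ThetaSet g)) ∧
    (∀ᵐ g ∂μ, ¬ IsAffLatticeOnRight (rotSet (ThetaSet g))) ∧
    ∫⁻ g, {g' | IsAffLatticeOnRight (ThetaSet g')}.indicator (fun _ => (1 : ℝ≥0∞)) g ∂μ
      ≠ ∫⁻ g, {g' | IsAffLatticeOnRight (rotSet (ThetaSet g'))}.indicator
          (fun _ => (1 : ℝ≥0∞)) g ∂μ := by
  have hright : ∀ g : Matrix (Fin 2) (Fin 2) ℝ × (Fin 2 → ℝ), g.1.det = 1 →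
      IsAffLatticeOnRight (ThetaSet g) := fun g hg => isAffLatticeOnRight_ThetaSet (by simp [hg])
  have hrot : ∀ᵐ g ∂μ, ¬ IsAffLatticeOnRight (rotSet (ThetaSet g)) := by
    filter_upwards [hdet, measure_eq_zero_iff_ae_notMem.1 (measure_degenerateSet_eq_zero hinv)]
      with g hg hD
    exact fun h => hD (mem_degenerateSet_of_isAffLatticeOnRight_rotSet (by simp [hg]) h)
  refine ⟨hright, hrot, ?_⟩
  set S := {g' | IsAffLatticeOnRight (ThetaSet g')}
  set S' := {g' | IsAffLatticeOnRight (rotSet (ThetaSet g'))}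
  have hone : ∫⁻ g, S.indicator (fun _ => 1) g ∂μ = 1 := by
    rw [lintegral_congr_ae (hdet.mono fun g hg => Set.indicator_of_mem (s := S) (hright g hg) _),
      lintegral_const, measure_univ, one_mul]
  have hzero : ∫⁻ g, S'.indicator (fun _ => 1) g ∂μ = 0 := by
    rw [lintegral_congr_ae (hrot.mono fun g hg => Set.indicator_of_notMem (s := S') hg _),
      lintegral_zero]
  rw [hone, hzero]
  exact one_ne_zero
end
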